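/- arXiv:2109.08386 — 6 statements merged into one kernel-verified Lean document; each statement's English description precedes it below -/
import Mathlib

section
/- For every matrix Q ∈ ℝ^{p×m}, there exists an upper triangular matrix U ∈ ℝ^{m×m} with ones on the diagonal and an invertible lower triangular matrix L ∈ ℝ^{p×p} such that LQU is in canonical form. -/
/-- A matrix is in canonical form if it is zero, or its nonzero entries are all equal
to `1` and located at positions `(r k, c k)` with `r` strictly increasing and `c`
injective. -/
def IsCanonicalForm {p m : ℕ} (Q : Matrix (Fin p) (Fin m) ℝ) : Prop :=
  Q = 0 ∨ ∃ ρ : ℕ, 0 < ρ ∧ ∃ (r : Fin ρ → Fin p) (c : Fin ρ → Fin m),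
    StrictMono r ∧ Function.Injective c ∧
    (∀ k, Q (r k) (c k) = 1) ∧
    (∀ i j, (∀ k, ¬(i = r k ∧ j = c k)) → Q i j = 0)

/-!
Column-by-column Gaussian elimination. Call a column reduced if it is zero or carries a pivot:
an entry `1` that is the only nonzero entry of both its row and its column. Suppose the columns
left of `a` are reduced and column `a` is not zero, and let `i₀` be its topmost nonzero row.
Row `i₀` vanishes left of `a`, since a reduced column there is zero or has its pivot in another
row. Hence the row operation that scales `M i₀ a` to `1` and subtracts multiples of row `i₀`
from the rows below is lower triangular, clears column `a` and leaves the reduced columns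
untouched; subtracting multiples of column `a` from the columns to its right is unipotent upper
triangular and clears row `i₀`. When all columns are reduced, the pivots listed by increasing
row give the canonical form.
-/

namespace Matrix

theorem IsUpperTriangular.mul_apply_self {R n : Type*} [NonUnitalNonAssocSemiring R]
    [Fintype n] [LinearOrder n] {A B : Matrix n n R} (hA : A.IsUpperTriangular)
    (hB : B.IsUpperTriangular) (i : n) : (A * B) i i = A i i * B i i := by
  rw [mul_apply]
  refine Finset.sum_eq_single i (fun k _ hki => ?_) (by simp)
  rcases hki.lt_or_gt with hk | hk
  · rw [hA hk, zero_mul]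
  · rw [hB hk, mul_zero]

section RankOneUpdate

variable {R : Type*} [Ring R]

theorem one_sub_vecMulVec_single_mul_apply {ι κ : Type*} [Fintype ι] [DecidableEq ι]
    (u : ι → R) (i₀ : ι) (M : Matrix ι κ R) (i : ι) (j : κ) :
    ((1 - vecMulVec u (Pi.single i₀ 1) : Matrix ι ι R) * M) i j = M i j - u i * M i₀ j := by
  rw [Matrix.sub_mul, Matrix.one_mul, vecMulVec_mul, single_one_vecMul]
  rfl

theorem mul_one_sub_vecMulVec_single_apply {ι κ : Type*} [Fintype κ] [DecidableEq κ]
    (M : Matrix ι κ R) (a : κ) (x : κ → R) (i : ι) (j : κ) :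
    (M * (1 - vecMulVec (Pi.single a 1) x : Matrix κ κ R)) i j = M i j - M i a * x j := by
  rw [Matrix.mul_sub, Matrix.mul_one, mul_vecMulVec, mulVec_single_one]
  rfl

theorem isLowerTriangular_one_sub_vecMulVec_single {n : Type*} [LinearOrder n] {u : n → R}
    {i₀ : n} (hu : ∀ i < i₀, u i = 0) :
    (1 - vecMulVec u (Pi.single i₀ 1)).IsLowerTriangular := by
  intro i i' (hii' : i < i')
  rcases eq_or_ne i' i₀ with rfl | hi'
  · simp [vecMulVec_apply, hu i hii', hii'.ne]
  · simp [vecMulVec_apply, hi', hii'.ne]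

theorem isUpperTriangular_one_sub_vecMulVec_single {n : Type*} [LinearOrder n] {x : n → R}
    {a : n} (hx : ∀ j ≤ a, x j = 0) :
    (1 - vecMulVec (Pi.single a 1) x).IsUpperTriangular := by
  intro j j' (hj'j : j' < j)
  rcases eq_or_ne j a with rfl | hj
  · simp [vecMulVec_apply, hx j' hj'j.le, hj'j.ne']
  · simp [vecMulVec_apply, hj, hj'j.ne']

end RankOneUpdate

section Reachable

variable {K ι κ : Type*} [CommRing K] [Fintype ι] [LinearOrder ι] [Fintype κ] [LinearOrder κ]

theorem det_one_sub_vecMulVec_single {u : ι → K} {i₀ : ι} (hu : ∀ i < i₀, u i = 0) :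
    (1 - vecMulVec u (Pi.single i₀ 1)).det = 1 - u i₀ := by
  rw [det_of_isLowerTriangular _ (isLowerTriangular_one_sub_vecMulVec_single hu),
    Finset.prod_eq_single i₀ (fun i _ hi => by simp [vecMulVec_apply, hi]) (by simp)]
  simp [vecMulVec_apply]

def LCUReachable (M N : Matrix ι κ K) : Prop :=
  ∃ (U : Matrix κ κ K) (L : Matrix ι ι K), U.IsUpperTriangular ∧ (∀ j, U j j = 1) ∧
    L.IsLowerTriangular ∧ IsUnit L.det ∧ N = L * M * U

theorem LCUReachable.refl (M : Matrix ι κ K) : LCUReachable M M :=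
  ⟨1, 1, blockTriangular_one, fun _ => one_apply_eq _, blockTriangular_one, by simp, by simp⟩

theorem LCUReachable.trans {M N P : Matrix ι κ K} (hMN : LCUReachable M N)
    (hNP : LCUReachable N P) : LCUReachable M P := by
  obtain ⟨U, L, hU, hU₁, hL, hLdet, rfl⟩ := hMN
  obtain ⟨U', L', hU', hU'₁, hL', hL'det, rfl⟩ := hNP
  refine ⟨U * U', L' * L, hU.mul hU', fun j => ?_, hL'.mul hL, ?_,
    by simp only [Matrix.mul_assoc]⟩
  · rw [hU.mul_apply_self hU', hU₁, hU'₁, one_mul]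
  · rw [det_mul]
    exact hL'det.mul hLdet

end Reachable

section Pivot

variable {R ι κ : Type*} [Zero R] [One R] [DecidableEq ι] [DecidableEq κ]

def IsPivot (M : Matrix ι κ R) (i : ι) (j : κ) : Prop :=
  Mᵀ j = Pi.single i 1 ∧ M i = Pi.single j 1

def IsReducedColumn (M : Matrix ι κ R) (j : κ) : Prop :=
  Mᵀ j = 0 ∨ ∃ i, M.IsPivot i j

theorem IsPivot.apply_eq_zero_of_ne {M : Matrix ι κ R} {i : ι} {j a : κ} (h : M.IsPivot i j)
    (ha : a ≠ j) : M i a = 0 := by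
  rw [h.2, Pi.single_eq_of_ne ha]

theorem IsPivot.row_unique [NeZero (1 : R)] {M : Matrix ι κ R} {i i' : ι} {j : κ}
    (h : M.IsPivot i j) (h' : M.IsPivot i' j) : i = i' := by
  by_contra hne
  have := congrFun (h.1.symm.trans h'.1) i
  rw [Pi.single_eq_same, Pi.single_eq_of_ne hne] at this
  exact one_ne_zero this

theorem IsReducedColumn.apply_eq_zero {M : Matrix ι κ R} {i : ι} {j a : κ}
    (h : M.IsReducedColumn j) (hia : M i a ≠ 0) (ha : a ≠ j) : M i j = 0 := by
  rcases h with h | ⟨i', hpiv⟩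
  · exact congrFun h i
  · have hi : i ≠ i' := by rintro rfl; exact hia (hpiv.apply_eq_zero_of_ne ha)
    exact (congrFun hpiv.1 i).trans (Pi.single_eq_of_ne hi _)

theorem IsReducedColumn.of_transpose_eq {M N : Matrix ι κ R} {j : κ} (h : M.IsReducedColumn j)
    (hcol : Nᵀ j = Mᵀ j) (hrow : ∀ i, M.IsPivot i j → N i = M i) : N.IsReducedColumn j := by
  rcases h with h | ⟨i, hpiv⟩
  · exact .inl (hcol.trans h)
  · exact .inr ⟨i, hcol.trans hpiv.1, (hrow i hpiv).trans hpiv.2⟩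

end Pivot

section Elimination

variable {K ι κ : Type*} [Field K] [Fintype ι] [LinearOrder ι] [Fintype κ] [LinearOrder κ]
  {M : Matrix ι κ K} {a : κ} {i₀ : ι}

theorem exists_lcuReachable_clear_column (hM : ∀ j < a, M.IsReducedColumn j)
    (hi₀ : M i₀ a ≠ 0) (habove : ∀ i < i₀, M i a = 0) :
    ∃ N, LCUReachable M N ∧ (∀ j < a, N.IsReducedColumn j) ∧ Nᵀ a = Pi.single i₀ 1 := by
  set u : ι → K := fun i => (M i₀ a)⁻¹ * (M i a - (Pi.single i₀ 1 : ι → K) i) with hu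
  have hu_lt : ∀ i < i₀, u i = 0 := fun i hi => by simp [hu, habove i hi, hi.ne]
  set L : Matrix ι ι K := 1 - vecMulVec u (Pi.single i₀ 1)
  have hdet : L.det = (M i₀ a)⁻¹ := by
    rw [det_one_sub_vecMulVec_single hu_lt]
    simp [hu, mul_sub, inv_mul_cancel₀ hi₀]
  have hLM : ∀ i j, (L * M) i j = M i j - u i * M i₀ j :=
    one_sub_vecMulVec_single_mul_apply u i₀ M
  refine ⟨L * M, ⟨1, L, blockTriangular_one, fun _ => one_apply_eq _,
    isLowerTriangular_one_sub_vecMulVec_single hu_lt,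
    hdet ▸ (inv_ne_zero hi₀).isUnit, (Matrix.mul_one _).symm⟩,
    fun j hj => ?_, funext fun i => ?_⟩
  · refine (hM j hj).of_transpose_eq (funext fun i => ?_) fun i hpiv =>
      funext fun j' => ?_
    · simp [hLM, (hM j hj).apply_eq_zero hi₀ hj.ne']
    · have hia : M i a = 0 := hpiv.apply_eq_zero_of_ne hj.ne'
      have hi : i ≠ i₀ := by rintro rfl; exact hi₀ hia
      simp [hLM, hu, hia, hi]
  · rw [transpose_apply, hLM, hu]
    field_simp
    ring

theorem exists_lcuReachable_clear_row (hM : ∀ j < a, M.IsReducedColumn j)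
    (hcol : Mᵀ a = Pi.single i₀ 1) : ∃ N, LCUReachable M N ∧ ∀ j ≤ a, N.IsReducedColumn j := by
  have hi₀ : M i₀ a = 1 := by simpa using congrFun hcol i₀
  have hleft : ∀ j < a, M i₀ j = 0 := fun j hj =>
    (hM j hj).apply_eq_zero (hi₀ ▸ one_ne_zero) hj.ne'
  set x : κ → K := fun j => if a < j then M i₀ j else 0 with hx
  have hx_le : ∀ j ≤ a, x j = 0 := fun j hj => if_neg hj.not_gt
  set U : Matrix κ κ K := 1 - vecMulVec (Pi.single a 1) x
  have hMU : ∀ i j, (M * U) i j = M i j - (Pi.single i₀ 1 : ι → K) i * x j := fun i j => by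
    rw [mul_one_sub_vecMulVec_single_apply, show M i a = _ from congrFun hcol i]
  have hcol_le : ∀ j ≤ a, (M * U)ᵀ j = Mᵀ j := fun j hj =>
    funext fun i => by simp [hMU, hx_le j hj]
  refine ⟨M * U, ⟨U, 1, isUpperTriangular_one_sub_vecMulVec_single hx_le, fun j => ?_,
    blockTriangular_one, by simp, by rw [Matrix.one_mul]⟩, fun j hj => ?_⟩
  · rcases eq_or_ne j a with rfl | hj
    · simp [U, vecMulVec_apply, hx_le j le_rfl]
    · simp [U, vecMulVec_apply, hj]
  rcases hj.lt_or_eq with hj | rfl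
  · refine (hM j hj).of_transpose_eq (hcol_le j hj.le) fun i hpiv => funext fun j' => ?_
    have hi : i ≠ i₀ := by
      rintro rfl
      exact one_ne_zero (hi₀.symm.trans (hpiv.apply_eq_zero_of_ne hj.ne'))
    simp [hMU, hi]
  · refine .inr ⟨i₀, (hcol_le j le_rfl).trans hcol, funext fun j' => ?_⟩
    rcases lt_trichotomy j' j with hj' | rfl | hj'
    · simp [hMU, hleft j' hj', hx_le j' hj'.le, hj'.ne]
    · simp [hMU, hi₀, hx_le j' le_rfl]
    · simp [hMU, hx, hj', hj'.ne']

theorem exists_lcuReachable_reduce_column (hM : ∀ j < a, M.IsReducedColumn j) :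
    ∃ N, LCUReachable M N ∧ ∀ j ≤ a, N.IsReducedColumn j := by
  by_cases hzero : Mᵀ a = 0
  · refine ⟨M, .refl M, fun j hj => ?_⟩
    rcases hj.lt_or_eq with hj | rfl
    exacts [hM j hj, .inl hzero]
  obtain ⟨i₀, hi₀, hmin⟩ :=
    wellFounded_lt.has_min {i | M i a ≠ 0} (Function.ne_iff.mp hzero)
  have habove : ∀ i < i₀, M i a = 0 := fun i hi => not_not.mp fun h => hmin i h hi
  obtain ⟨N, hMN, hN, hcol⟩ := exists_lcuReachable_clear_column hM hi₀ habove
  obtain ⟨P, hNP, hP⟩ := exists_lcuReachable_clear_row hN hcol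
  exact ⟨P, hMN.trans hNP, hP⟩

theorem exists_lcuReachable_forall_isReducedColumn (M : Matrix ι κ K) :
    ∃ N, LCUReachable M N ∧ ∀ j, N.IsReducedColumn j := by
  suffices h : ∀ s : Finset κ, IsLowerSet (s : Set κ) →
      ∃ N, LCUReachable M N ∧ ∀ j ∈ s, N.IsReducedColumn j by
    simpa using h Finset.univ (by simp [isLowerSet_univ])
  intro s
  induction s using Finset.induction_on_max with
  | empty => exact fun _ => ⟨M, .refl M, by simp⟩
  | insert a s hlt ih =>
    intro hs
    have hbelow : ∀ j < a, j ∈ s := fun j hj =>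
      (Finset.mem_insert.mp (hs hj.le (Finset.mem_insert_self a s))).resolve_left hj.ne
    obtain ⟨N, hMN, hN⟩ := ih fun x y hyx hx => hbelow y (hyx.trans_lt (hlt x hx))
    obtain ⟨P, hNP, hP⟩ := exists_lcuReachable_reduce_column fun j hj => hN j (hbelow j hj)
    refine ⟨P, hMN.trans hNP, fun j hj => hP j ?_⟩
    rcases Finset.mem_insert.mp hj with rfl | hj
    exacts [le_rfl, (hlt j hj).le]

end Elimination

theorem isCanonicalForm_of_forall_isReducedColumn {p m : ℕ} {M : Matrix (Fin p) (Fin m) ℝ}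
    (hM : ∀ j, M.IsReducedColumn j) : IsCanonicalForm M := by
  classical
  set S : Finset (Fin p) := {i | ∃ j, M.IsPivot i j}
  have hmem {i j} (h : M.IsPivot i j) : i ∈ S :=
    Finset.mem_filter.mpr ⟨Finset.mem_univ i, j, h⟩
  rcases S.eq_empty_or_nonempty with hS | hS
  · refine .inl (ext fun i j => ?_)
    rcases hM j with h | ⟨i', hpiv⟩
    · exact congrFun h i
    · exact absurd (hmem hpiv) (hS ▸ Finset.notMem_empty i')
  set r := S.orderEmbOfFin rfl
  choose c hc using fun k => (Finset.mem_filter.mp (S.orderEmbOfFin_mem rfl k)).2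
  refine .inr ⟨S.card, hS.card_pos, r, c, r.strictMono,
    fun k l hkl => r.injective ((hc k).row_unique (hkl ▸ hc l)),
    fun k => by rw [(hc k).2, Pi.single_eq_same], fun i j hij => ?_⟩
  rcases hM j with h | ⟨i', hpiv⟩
  · exact congrFun h i
  obtain rfl | hi := eq_or_ne i i'
  · obtain ⟨k, rfl⟩ : i ∈ Set.range r := by
      rw [Finset.range_orderEmbOfFin]
      exact hmem hpiv
    exact (hc k).2 ▸ Pi.single_eq_of_ne (fun h => hij k ⟨rfl, h⟩) _
  · exact (congrFun hpiv.1 i).trans (Pi.single_eq_of_ne hi _)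

end Matrix

/-- existence of the LCU decomposition: for every `Q` there exist a
unipotent upper triangular `U` and an invertible lower triangular `L` such that
`L * Q * U` is in canonical form. -/
theorem lcu_exists {p m : ℕ} (Q : Matrix (Fin p) (Fin m) ℝ) :
    ∃ (U : Matrix (Fin m) (Fin m) ℝ) (L : Matrix (Fin p) (Fin p) ℝ),
      (∀ i j : Fin m, j < i → U i j = 0) ∧ (∀ i : Fin m, U i i = 1) ∧
      (∀ i j : Fin p, i < j → L i j = 0) ∧ IsUnit L.det ∧
      IsCanonicalForm (L * Q * U) := by
  obtain ⟨_, ⟨U, L, hU, hU₁, hL, hLdet, rfl⟩, hred⟩ :=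
    Matrix.exists_lcuReachable_forall_isReducedColumn Q
  exact ⟨U, L, fun _ _ h => hU h, hU₁, fun _ _ h => hL h, hLdet,
    Matrix.isCanonicalForm_of_forall_isReducedColumn hred⟩
end

section
/- The canonical form in the LCU decomposition is unique: if Q ∈ ℝ^{p×m} and Q⁰₁, Q⁰₂ are both in canonical form with L₁QU₁ = Q⁰₁ and L₂QU₂ = Q⁰₂ for upper triangular unipotent U₁,U₂ ∈ ℝ^{m×m} and invertible lower triangular L₁,L₂ ∈ ℝ^{p×p}, then Q⁰₁ = Q⁰₂. -/
/-!
For lower triangular `L`, upper triangular `U` and blocks cut out by lower sets of rows and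
columns (e.g. leading blocks), the block of `L * Q * U` is the product of the corresponding
diagonal blocks of `L` and `U` with the block of `Q`; invertibility of `L` and `U` passes to
these diagonal blocks, so every such block of `L * Q * U` has the same rank as that of `Q`.
A canonical form is a partial permutation matrix, and the rank of a block of a partial
permutation matrix is the number of its ones, i.e. the sum of its entries. By
inclusion–exclusion over the four leading blocks with corners `(a, b)`, `(a - 1, b)`,
`(a, b - 1)`, `(a - 1, b - 1)`, these sums determine every entry, so `Q` determines its
canonical form.
-/

open Matrix Finset

theorem Finset.sum_filter_le_eq_add_sum_filter_lt {α M : Type*} [Fintype α] [LinearOrder α]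
    [AddCommMonoid M] (g : α → M) (a : α) :
    ∑ x with x ≤ a, g x = g a + ∑ x with x < a, g x := by
  have hinsert : univ.filter (· ≤ a) = insert a (univ.filter (· < a)) := by
    ext x
    simp [le_iff_lt_or_eq, or_comm]
  rw [hinsert, sum_insert (by simp)]

namespace Matrix

section Triangular

variable {α β γ R : Type*} [Fintype α] [Fintype β] [LinearOrder α] [LinearOrder β] [CommRing R]
  {s : Finset α} {t : Finset β}

theorem IsLowerTriangular.toBlock_mul_of_isLowerSet {L : Matrix α α R}
    (hL : L.IsLowerTriangular) (hs : IsLowerSet (s : Set α)) (M : Matrix α γ R) (r : γ → Prop) :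
    (L * M).toBlock (· ∈ s) r = L.toBlock (· ∈ s) (· ∈ s) * M.toBlock (· ∈ s) r := by
  have hzero : L.toBlock (· ∈ s) (· ∉ s) = 0 := by
    ext ⟨i, hi⟩ ⟨j, hj⟩
    exact hL (lt_of_not_ge fun hji => hj (hs hji hi))
  rw [toBlock_mul_eq_add _ (· ∈ s), hzero, Matrix.zero_mul, add_zero]
  -- the two sides differ only in the `Fintype` instance on `{x // x ∈ s}`
  congr!

theorem IsUpperTriangular.mul_toBlock_of_isLowerSet {U : Matrix β β R}
    (hU : U.IsUpperTriangular) (ht : IsLowerSet (t : Set β)) (M : Matrix γ β R) (r : γ → Prop) :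
    (M * U).toBlock r (· ∈ t) = M.toBlock r (· ∈ t) * U.toBlock (· ∈ t) (· ∈ t) := by
  have hzero : U.toBlock (· ∉ t) (· ∈ t) = 0 := by
    ext ⟨i, hi⟩ ⟨j, hj⟩
    exact hU (lt_of_not_ge fun hij => hi (ht hij hj))
  rw [toBlock_mul_eq_add _ (· ∈ t), hzero, Matrix.mul_zero, add_zero]
  congr!

theorem IsLowerTriangular.isUnit_det_toBlock {L : Matrix α α R} (hL : L.IsLowerTriangular)
    (hdet : IsUnit L.det) (hs : IsLowerSet (s : Set α)) :
    IsUnit (L.toBlock (· ∈ s) (· ∈ s)).det := by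
  rw [L.twoBlockTriangular_det' (· ∈ s)
    fun i hi j hj => hL (lt_of_not_ge fun hji => hj (hs hji hi))] at hdet
  convert isUnit_of_mul_isUnit_left hdet using 2
  rfl

theorem IsUpperTriangular.isUnit_det_toBlock {U : Matrix β β R} (hU : U.IsUpperTriangular)
    (hdet : IsUnit U.det) (ht : IsLowerSet (t : Set β)) :
    IsUnit (U.toBlock (· ∈ t) (· ∈ t)).det := by
  rw [U.twoBlockTriangular_det (· ∈ t)
    fun i hi j hj => hU (lt_of_not_ge fun hij => hi (ht hij hj))] at hdet
  convert isUnit_of_mul_isUnit_left hdet using 2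
  rfl

theorem rank_toBlock_mul_mul_of_isTriangular {L : Matrix α α R} {U : Matrix β β R}
    (hL : L.IsLowerTriangular) (hLdet : IsUnit L.det)
    (hU : U.IsUpperTriangular) (hUdet : IsUnit U.det)
    (hs : IsLowerSet (s : Set α)) (ht : IsLowerSet (t : Set β)) (M : Matrix α β R) :
    ((L * M * U).toBlock (· ∈ s) (· ∈ t)).rank = (M.toBlock (· ∈ s) (· ∈ t)).rank := by
  rw [hU.mul_toBlock_of_isLowerSet ht, hL.toBlock_mul_of_isLowerSet hs,
    rank_mul_eq_left_of_isUnit_det _ _ (hU.isUnit_det_toBlock hUdet ht),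
    rank_mul_eq_right_of_isUnit_det _ _ (hL.isUnit_det_toBlock hLdet hs)]

theorem IsUpperTriangular.det_eq_one {U : Matrix α α R} (hU : U.IsUpperTriangular)
    (hdiag : ∀ i, U i i = 1) : U.det = 1 := by
  simp [det_of_isUpperTriangular hU, hdiag]

end Triangular

theorem ext_of_forall_isLowerSet_sum_eq {α β R : Type*} [Fintype α] [Fintype β]
    [LinearOrder α] [LinearOrder β] [AddCommGroup R] {M N : Matrix α β R}
    (h : ∀ (s : Finset α) (t : Finset β), IsLowerSet (s : Set α) → IsLowerSet (t : Set β) →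
      ∑ x ∈ s, ∑ y ∈ t, M x y = ∑ x ∈ s, ∑ y ∈ t, N x y) :
    M = N := by
  have inclusion_exclusion (P : Matrix α β R) (a : α) (b : β) :
      P a b = ∑ x with x ≤ a, ∑ y with y ≤ b, P x y - ∑ x with x < a, ∑ y with y ≤ b, P x y
        - ∑ x with x ≤ a, ∑ y with y < b, P x y + ∑ x with x < a, ∑ y with y < b, P x y := by
    simp only [sum_filter_le_eq_add_sum_filter_lt]
    abel
  ext a b
  have hIic : IsLowerSet ((univ.filter (· ≤ a) : Finset α) : Set α) := by simpa using antitone_le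
  have hIio : IsLowerSet ((univ.filter (· < a) : Finset α) : Set α) := by simpa using antitone_lt
  have hIic' : IsLowerSet ((univ.filter (· ≤ b) : Finset β) : Set β) := by simpa using antitone_le
  have hIio' : IsLowerSet ((univ.filter (· < b) : Finset β) : Set β) := by simpa using antitone_lt
  rw [inclusion_exclusion M, inclusion_exclusion N, h _ _ hIic hIic', h _ _ hIio hIic',
    h _ _ hIic hIio', h _ _ hIio hIio']

structure IsPartialPerm {α β R : Type*} [Zero R] [One R] (M : Matrix α β R) : Prop where
  eq_zero_or_eq_one : ∀ a b, M a b = 0 ∨ M a b = 1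
  unique_one_in_row : ∀ a b b', M a b = 1 → M a b' = 1 → b = b'
  unique_one_in_col : ∀ a a' b, M a b = 1 → M a' b = 1 → a = a'

namespace IsPartialPerm

section Support

variable {α β R : Type*} [Zero R] [One R] [NeZero (1 : R)]

theorem zero : (0 : Matrix α β R).IsPartialPerm where
  eq_zero_or_eq_one _ _ := .inl rfl
  unique_one_in_row _ _ _ h := absurd h zero_ne_one
  unique_one_in_col _ _ _ h := absurd h zero_ne_one

theorem of_eq_one_of_eq_zero {ι : Type*} {M : Matrix α β R} {r : ι → α} {c : ι → β}
    (hr : r.Injective) (hc : c.Injective) (hone : ∀ k, M (r k) (c k) = 1)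
    (hzero : ∀ i j, (∀ k, ¬(i = r k ∧ j = c k)) → M i j = 0) : M.IsPartialPerm := by
  have pivot {i j} (h : M i j = 1) : ∃ k, i = r k ∧ j = c k := by
    by_contra! hk
    exact zero_ne_one ((hzero i j fun k hk' => hk k hk'.1 hk'.2).symm.trans h)
  refine ⟨fun i j => ?_, fun i j j' h h' => ?_, fun i i' j h h' => ?_⟩
  · by_cases hk : ∃ k, i = r k ∧ j = c k
    · obtain ⟨k, rfl, rfl⟩ := hk
      exact .inr (hone k)
    · exact .inl (hzero i j fun k hk' => hk ⟨k, hk'⟩)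
  · obtain ⟨k, rfl, rfl⟩ := pivot h
    obtain ⟨k', hkk', rfl⟩ := pivot h'
    rw [hr hkk']
  · obtain ⟨k, rfl, rfl⟩ := pivot h
    obtain ⟨k', rfl, hkk'⟩ := pivot h'
    rw [hc hkk']

end Support

theorem submatrix {α β γ δ R : Type*} [Zero R] [One R] {M : Matrix α β R}
    (hM : M.IsPartialPerm) {f : γ → α} {g : δ → β} (hf : f.Injective) (hg : g.Injective) :
    (M.submatrix f g).IsPartialPerm where
  eq_zero_or_eq_one _ _ := hM.eq_zero_or_eq_one _ _
  unique_one_in_row _ _ _ hb hb' := hg (hM.unique_one_in_row _ _ _ hb hb')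
  unique_one_in_col _ _ _ ha ha' := hf (hM.unique_one_in_col _ _ _ ha ha')

section Rank

variable {α β R : Type*} [Fintype β] [Semiring R] {M : Matrix α β R}

theorem sum_row_eq_zero_or_eq_one (hM : M.IsPartialPerm) (a : α) :
    ∑ b, M a b = 0 ∨ ∑ b, M a b = 1 := by
  have eq_zero_of_ne_one {b} (hb : M a b ≠ 1) : M a b = 0 :=
    (hM.eq_zero_or_eq_one a b).resolve_right hb
  by_cases h : ∃ b, M a b = 1
  · obtain ⟨b, hb⟩ := h
    refine .inr ?_
    rw [sum_eq_single b (fun b' _ hb' => eq_zero_of_ne_one fun h' =>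
      hb' (hM.unique_one_in_row _ _ _ h' hb)) (by simp), hb]
  · simp only [not_exists] at h
    exact .inl (sum_eq_zero fun b _ => eq_zero_of_ne_one (h b))

theorem mul_transpose_self [DecidableEq α] (hM : M.IsPartialPerm) :
    M * Mᵀ = diagonal fun a => ∑ b, M a b := by
  ext a a'
  rw [mul_apply, diagonal_apply]
  split_ifs with h
  · subst h
    refine sum_congr rfl fun b _ => ?_
    rcases hM.eq_zero_or_eq_one a b with h | h <;> simp [h]
  · refine sum_eq_zero fun b _ => ?_
    rcases hM.eq_zero_or_eq_one a b with hab | hab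
    · simp [hab]
    rcases hM.eq_zero_or_eq_one a' b with ha'b | ha'b
    · simp [ha'b]
    · exact absurd (hM.unique_one_in_col _ _ _ hab ha'b) h

variable {K : Type*} [Field K] [LinearOrder K] [IsStrictOrderedRing K]

theorem rank_eq_sum [Fintype α] {M : Matrix α β K} (hM : M.IsPartialPerm) :
    (M.rank : K) = ∑ a, ∑ b, M a b := by
  classical
  rw [← rank_self_mul_transpose, hM.mul_transpose_self, rank_diagonal, Fintype.card_subtype,
    natCast_card_filter]
  refine sum_congr rfl fun a _ => ?_
  rcases hM.sum_row_eq_zero_or_eq_one a with h | h <;> simp [h]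

end Rank

theorem rank_toBlock {α β K : Type*} [Field K] [LinearOrder K] [IsStrictOrderedRing K]
    {M : Matrix α β K} (hM : M.IsPartialPerm) (s : Finset α) (t : Finset β) :
    ((M.toBlock (· ∈ s) (· ∈ t)).rank : K) = ∑ x ∈ s, ∑ y ∈ t, M x y := by
  have hblock : (M.toBlock (· ∈ s) (· ∈ t)).IsPartialPerm :=
    hM.submatrix Subtype.val_injective Subtype.val_injective
  rw [hblock.rank_eq_sum, ← sum_coe_sort s]
  exact sum_congr rfl fun x _ => sum_coe_sort t fun y => M x y

end IsPartialPerm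

end Matrix

theorem IsCanonicalForm.isPartialPerm {p m : ℕ} {Q : Matrix (Fin p) (Fin m) ℝ}
    (hQ : IsCanonicalForm Q) : Q.IsPartialPerm := by
  obtain rfl | ⟨_, -, r, c, hr, hc, hone, hzero⟩ := hQ
  · exact .zero
  · exact .of_eq_one_of_eq_zero hr.injective hc hone hzero

/-- uniqueness of the canonical form in the LCU decomposition. -/
theorem lcu_unique {p m : ℕ} (Q Q1 Q2 : Matrix (Fin p) (Fin m) ℝ)
    (U1 U2 : Matrix (Fin m) (Fin m) ℝ) (L1 L2 : Matrix (Fin p) (Fin p) ℝ)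
    (hU1 : ∀ i j : Fin m, j < i → U1 i j = 0) (hU1d : ∀ i : Fin m, U1 i i = 1)
    (hU2 : ∀ i j : Fin m, j < i → U2 i j = 0) (hU2d : ∀ i : Fin m, U2 i i = 1)
    (hL1 : ∀ i j : Fin p, i < j → L1 i j = 0) (hL1inv : IsUnit L1.det)
    (hL2 : ∀ i j : Fin p, i < j → L2 i j = 0) (hL2inv : IsUnit L2.det)
    (h1 : L1 * Q * U1 = Q1) (hc1 : IsCanonicalForm Q1)
    (h2 : L2 * Q * U2 = Q2) (hc2 : IsCanonicalForm Q2) :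
    Q1 = Q2 := by
  have hL1' : L1.IsLowerTriangular := fun i j h => hL1 i j h
  have hL2' : L2.IsLowerTriangular := fun i j h => hL2 i j h
  have hU1' : U1.IsUpperTriangular := fun i j h => hU1 i j h
  have hU2' : U2.IsUpperTriangular := fun i j h => hU2 i j h
  have hU1inv : IsUnit U1.det := by simp [hU1'.det_eq_one hU1d]
  have hU2inv : IsUnit U2.det := by simp [hU2'.det_eq_one hU2d]
  refine ext_of_forall_isLowerSet_sum_eq fun s t hs ht => ?_
  rw [← hc1.isPartialPerm.rank_toBlock, ← hc2.isPartialPerm.rank_toBlock, ← h1, ← h2,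
    rank_toBlock_mul_mul_of_isTriangular hL1' hL1inv hU1' hU1inv hs ht,
    rank_toBlock_mul_mul_of_isTriangular hL2' hL2inv hU2' hU2inv hs ht]
end

section
/- Let a, b ∈ ℝ with ab ∉ { −(π/2 + kπ)² : k ∈ ℕ }. Then for every f ∈ L²(0,1;ℝ) there exists a unique u ∈ L²(0,1;ℝ) solving the integral equation u(t) + ab ∫ₜ¹ ∫₀ˢ u(σ) dσ ds = f(t) for a.e. t ∈ (0,1). -/
/-!
With `c = ab`, let `α, β` be the solutions of `y'' = c y` with initial data `(1, 0)` and `(0, 1)`;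
the hypothesis on `ab` says exactly that `α 1 ≠ 0` (`α 1 = cos √(-c)` when `c < 0`).

Write `K u t = ∫ₜ¹ ∫₀ˢ u`. If `U` is continuous and `U + c K U = K f`, then `u = f - c U` satisfies
`K u = U`, hence solves `u + c K u = f`. Since `K f t = ∫ₜ¹ F` with `F` continuous, this equation
for `U` is an ODE with continuous data, solved by variation of constants; the free multiple of `α`
is fixed by `U 1 = 0`, which needs `α 1 ≠ 0`.

If `w + c K w = 0` a.e., then `U = K w` satisfies `U = -c K U` on `[0, 1]`, so `U'' = c U`,
`U' 0 = 0` and `U 1 = 0`. Hence `U = U 0 • α`, which forces `U = 0`, and then `w = -c U = 0`.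
-/

open MeasureTheory Set intervalIntegral Real

noncomputable def doublePrimitive (h : ℝ → ℝ) (t : ℝ) : ℝ :=
  ∫ s in t..1, ∫ σ in (0:ℝ)..s, h σ

section doublePrimitive

variable {g h : ℝ → ℝ}

theorem hasDerivAt_doublePrimitive (hh : ∀ a b, IntervalIntegrable h volume a b) (t : ℝ) :
    HasDerivAt (doublePrimitive h) (-∫ σ in (0:ℝ)..t, h σ) t :=
  have hP := continuous_primitive hh 0
  integral_hasDerivAt_left (hP.intervalIntegrable _ _) (hP.stronglyMeasurableAtFilter _ _)
    hP.continuousAt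

theorem continuous_doublePrimitive (hh : ∀ a b, IntervalIntegrable h volume a b) :
    Continuous (doublePrimitive h) :=
  continuous_iff_continuousAt.2 fun t => (hasDerivAt_doublePrimitive hh t).continuousAt

theorem doublePrimitive_const_mul (c : ℝ) :
    doublePrimitive (fun s => c * h s) = fun t => c * doublePrimitive h t := by
  funext t
  simp only [doublePrimitive, intervalIntegral.integral_const_mul]

theorem doublePrimitive_sub (hg : ∀ a b, IntervalIntegrable g volume a b)
    (hh : ∀ a b, IntervalIntegrable h volume a b) (t : ℝ) :
    doublePrimitive (fun s => g s - h s) t = doublePrimitive g t - doublePrimitive h t := by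
  have inner (s : ℝ) :
      ∫ σ in (0:ℝ)..s, (g σ - h σ) = (∫ σ in (0:ℝ)..s, g σ) - ∫ σ in (0:ℝ)..s, h σ :=
    integral_sub (hg 0 s) (hh 0 s)
  simp only [doublePrimitive, inner]
  exact integral_sub ((continuous_primitive hg 0).intervalIntegrable _ _)
    ((continuous_primitive hh 0).intervalIntegrable _ _)

theorem doublePrimitive_congr (hgh : g =ᵐ[volume.restrict (Ioo 0 1)] h) {t : ℝ}
    (ht : t ∈ Icc (0:ℝ) 1) : doublePrimitive g t = doublePrimitive h t := by
  have hIoc : g =ᵐ[volume.restrict (Ioc 0 1)] h := by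
    rwa [← Measure.restrict_congr_set Ioo_ae_eq_Ioc]
  refine integral_congr fun s hs => integral_congr_ae_restrict ?_
  rw [uIcc_of_le ht.2] at hs
  rw [uIoc_of_le (ht.1.trans hs.1)]
  exact ae_restrict_of_ae_restrict_of_subset (Ioc_subset_Ioc_right hs.2) hIoc

end doublePrimitive

theorem Continuous.memLp_restrict_Ioo {U : ℝ → ℝ} (hU : Continuous U) (p : ENNReal) (a b : ℝ) :
    MemLp U p (volume.restrict (Ioo a b)) := by
  obtain ⟨C, hC⟩ := (isCompact_Icc (a := a) (b := b)).exists_bound_of_continuousOn hU.continuousOn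
  exact MemLp.of_bound hU.aestronglyMeasurable C
    ((ae_restrict_mem measurableSet_Ioo).mono fun t ht => hC t (Ioo_subset_Icc_self ht))

/-- The solutions of `y'' = c y` with initial data `(1, 0)` and `(0, 1)`, as a first-order
system. -/
structure IsFundamentalPair (c : ℝ) (α β : ℝ → ℝ) : Prop where
  hasDerivAt_fst : ∀ t, HasDerivAt α (c * β t) t
  hasDerivAt_snd : ∀ t, HasDerivAt β (α t) t
  fst_zero : α 0 = 1
  snd_zero : β 0 = 0

theorem isFundamentalPair_cos {r : ℝ} (hr : r ≠ 0) :
    IsFundamentalPair (-r ^ 2) (fun t => cos (r * t)) (fun t => sin (r * t) / r) where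
  hasDerivAt_fst t := by
    convert ((hasDerivAt_id' t).const_mul r).cos using 1
    field_simp
  hasDerivAt_snd t :=
    ((hasDerivAt_id' t).const_mul r).sin.div_const r |>.congr_deriv (by field_simp)
  fst_zero := by simp
  snd_zero := by simp

theorem isFundamentalPair_cosh {r : ℝ} (hr : r ≠ 0) :
    IsFundamentalPair (r ^ 2) (fun t => cosh (r * t)) (fun t => sinh (r * t) / r) where
  hasDerivAt_fst t := by
    convert ((hasDerivAt_id' t).const_mul r).cosh using 1
    field_simp
  hasDerivAt_snd t :=
    ((hasDerivAt_id' t).const_mul r).sinh.div_const r |>.congr_deriv (by field_simp)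
  fst_zero := by simp
  snd_zero := by simp

theorem isFundamentalPair_zero : IsFundamentalPair 0 (fun _ => 1) id where
  hasDerivAt_fst t := by simpa using hasDerivAt_const t (1 : ℝ)
  hasDerivAt_snd t := hasDerivAt_id t
  fst_zero := rfl
  snd_zero := rfl

theorem cos_ne_zero_of_ne_pi_div_two_add {r : ℝ} (hr : 0 < r)
    (hne : ∀ k : ℕ, r ≠ π / 2 + k * π) : cos r ≠ 0 := by
  intro h
  obtain ⟨k, hk⟩ := cos_eq_zero_iff.1 h
  have hk0 : 0 ≤ k := by
    by_contra! hk'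
    have : (k : ℝ) ≤ -1 := by exact_mod_cast Int.le_sub_one_of_lt hk'
    nlinarith [pi_pos]
  lift k to ℕ using hk0
  exact hne k (by rw [hk]; push_cast; ring)

theorem exists_isFundamentalPair {c : ℝ} (hc : ∀ k : ℕ, c ≠ -(π / 2 + k * π) ^ 2) :
    ∃ α β, IsFundamentalPair c α β ∧ α 1 ≠ 0 := by
  rcases lt_trichotomy c 0 with hneg | rfl | hpos
  · obtain ⟨r, hr, rfl⟩ : ∃ r, 0 < r ∧ c = -r ^ 2 :=
      ⟨√(-c), sqrt_pos.2 (neg_pos.2 hneg), by rw [sq_sqrt (neg_nonneg.2 hneg.le), neg_neg]⟩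
    refine ⟨_, _, isFundamentalPair_cos hr.ne', ?_⟩
    rw [mul_one]
    exact cos_ne_zero_of_ne_pi_div_two_add hr fun k hk => hc k (by rw [hk])
  · exact ⟨_, _, isFundamentalPair_zero, one_ne_zero⟩
  · obtain ⟨r, hr, rfl⟩ : ∃ r, 0 < r ∧ c = r ^ 2 := ⟨√c, sqrt_pos.2 hpos, (sq_sqrt hpos.le).symm⟩
    exact ⟨_, _, isFundamentalPair_cosh hr.ne', (cosh_pos _).ne'⟩

namespace IsFundamentalPair

variable {c : ℝ} {α β : ℝ → ℝ}

theorem continuous_fst (hP : IsFundamentalPair c α β) : Continuous α :=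
  continuous_iff_continuousAt.2 fun t => (hP.hasDerivAt_fst t).continuousAt

theorem continuous_snd (hP : IsFundamentalPair c α β) : Continuous β :=
  continuous_iff_continuousAt.2 fun t => (hP.hasDerivAt_snd t).continuousAt

theorem sq_sub_mul_sq (hP : IsFundamentalPair c α β) (t : ℝ) : α t ^ 2 - c * β t ^ 2 = 1 := by
  have hd (x : ℝ) : HasDerivAt (fun t => α t ^ 2 - c * β t ^ 2) 0 x := by
    refine (((hP.hasDerivAt_fst x).pow 2).sub
      (((hP.hasDerivAt_snd x).pow 2).const_mul c)).congr_deriv ?_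
    push_cast
    ring
  have := is_const_of_deriv_eq_zero (fun x => (hd x).differentiableAt) (fun x => (hd x).deriv) t 0
  simpa [hP.fst_zero, hP.snd_zero] using this

theorem eq_mul_fst (hP : IsFundamentalPair c α β) {b : ℝ} {y y' : ℝ → ℝ}
    (hy : ∀ t ∈ Icc 0 b, HasDerivAt y (y' t) t)
    (hy' : ∀ t ∈ Icc 0 b, HasDerivAt y' (c * y t) t) (h0 : y' 0 = 0) :
    ∀ t ∈ Icc 0 b, y t = y 0 * α t := by
  have const {p : ℝ → ℝ} (hp : ∀ t ∈ Icc 0 b, HasDerivAt p 0 t) : ∀ t ∈ Icc 0 b, p t = p 0 :=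
    constant_of_has_deriv_right_zero (fun t ht => (hp t ht).continuousAt.continuousWithinAt)
      fun t ht => (hp t (Ico_subset_Icc_self ht)).hasDerivWithinAt
  -- the Wronskians of `y` with `β` and with `α` are constant, as all three solve `y'' = c y`
  have hp := const (p := fun t => y t * α t - y' t * β t) fun t ht => by
    refine (((hy t ht).mul (hP.hasDerivAt_fst t)).sub
      ((hy' t ht).mul (hP.hasDerivAt_snd t))).congr_deriv ?_
    ring
  have hq := const (p := fun t => c * y t * β t - y' t * α t) fun t ht => by
    refine ((((hy t ht).const_mul c).mul (hP.hasDerivAt_snd t)).sub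
      ((hy' t ht).mul (hP.hasDerivAt_fst t))).congr_deriv ?_
    ring
  intro t ht
  have hpt := hp t ht
  have hqt := hq t ht
  simp only [hP.fst_zero, hP.snd_zero, h0] at hpt hqt
  linear_combination α t * hpt - β t * hqt - y t * hP.sq_sub_mul_sq t

theorem hasDerivAt_fst_mul_add_snd_mul (hP : IsFundamentalPair c α β) {F X Y : ℝ → ℝ}
    (hX : ∀ t, HasDerivAt X (-(α t * F t)) t) (hY : ∀ t, HasDerivAt Y (c * (β t * F t)) t)
    (t : ℝ) :
    HasDerivAt (fun t => α t * X t + β t * Y t) (c * β t * X t + α t * Y t - F t) t := by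
  refine (((hP.hasDerivAt_fst t).mul (hX t)).add ((hP.hasDerivAt_snd t).mul (hY t))).congr_deriv ?_
  linear_combination -F t * hP.sq_sub_mul_sq t

theorem hasDerivAt_const_mul_snd_mul_add_fst_mul (hP : IsFundamentalPair c α β) {F X Y : ℝ → ℝ}
    (hX : ∀ t, HasDerivAt X (-(α t * F t)) t) (hY : ∀ t, HasDerivAt Y (c * (β t * F t)) t)
    (t : ℝ) :
    HasDerivAt (fun t => c * β t * X t + α t * Y t) (c * (α t * X t + β t * Y t)) t := by
  refine ((((hP.hasDerivAt_snd t).const_mul c).mul (hX t)).add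
    ((hP.hasDerivAt_fst t).mul (hY t))).congr_deriv ?_
  ring

theorem exists_continuous_add_doublePrimitive_eq (hP : IsFundamentalPair c α β) (hα1 : α 1 ≠ 0)
    {F : ℝ → ℝ} (hF : Continuous F) :
    ∃ U : ℝ → ℝ, Continuous U ∧ ∀ t, U t + c * doublePrimitive U t = ∫ s in t..1, F s := by
  set A := fun t => ∫ s in (0:ℝ)..t, α s * F s
  set B := fun t => ∫ s in (0:ℝ)..t, β s * F s
  have hA (t : ℝ) : HasDerivAt A (α t * F t) t :=
    ((hP.continuous_fst.mul hF).integral_hasStrictDerivAt 0 t).hasDerivAt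
  have hB (t : ℝ) : HasDerivAt B (β t * F t) t :=
    ((hP.continuous_snd.mul hF).integral_hasStrictDerivAt 0 t).hasDerivAt
  -- the constant is chosen so that `U 1 = 0`
  set l := A 1 - c * β 1 * B 1 / α 1
  set U := fun t => α t * (l - A t) + β t * (c * B t)
  set V := fun t => c * β t * (l - A t) + α t * (c * B t)
  have hX (t : ℝ) : HasDerivAt (fun t => l - A t) (-(α t * F t)) t := (hA t).const_sub l
  have hY (t : ℝ) : HasDerivAt (fun t => c * B t) (c * (β t * F t)) t := (hB t).const_mul c
  have hU := hP.hasDerivAt_fst_mul_add_snd_mul hX hY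
  have hV := hP.hasDerivAt_const_mul_snd_mul_add_fst_mul hX hY
  have hUc : Continuous U := continuous_iff_continuousAt.2 fun t => (hU t).continuousAt
  have hU1 : U 1 = 0 := by
    simp only [U, l]
    field_simp
    ring
  have hintU (t : ℝ) : c * ∫ s in (0:ℝ)..t, U s = V t := by
    rw [← intervalIntegral.integral_const_mul, integral_eq_sub_of_hasDerivAt (fun s _ => hV s)
      ((continuous_const.mul hUc).intervalIntegrable _ _)]
    simp [V, B, hP.fst_zero, hP.snd_zero]
  have hΦ (x : ℝ) :
      HasDerivAt (fun t => U t + c * doublePrimitive U t - ∫ s in t..1, F s) 0 x := by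
    refine (((hU x).add ((hasDerivAt_doublePrimitive (fun a b => hUc.intervalIntegrable a b)
      x).const_mul c)).sub (integral_hasDerivAt_left (hF.intervalIntegrable _ _)
      (hF.stronglyMeasurableAtFilter _ _) hF.continuousAt)).congr_deriv ?_
    rw [mul_neg, hintU]
    ring
  refine ⟨U, hUc, fun t => ?_⟩
  have := is_const_of_deriv_eq_zero (fun x => (hΦ x).differentiableAt) (fun x => (hΦ x).deriv) t 1
  have hK1 : doublePrimitive U 1 = 0 := integral_same
  simp only [hK1, integral_same, hU1] at this
  linarith

theorem eq_zero_of_eq_neg_mul_doublePrimitive (hP : IsFundamentalPair c α β) (hα1 : α 1 ≠ 0)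
    {U : ℝ → ℝ} (hU : Continuous U) (h : ∀ t ∈ Icc (0:ℝ) 1, U t = -c * doublePrimitive U t) :
    ∀ t ∈ Icc (0:ℝ) 1, U t = 0 := by
  set Y := fun t => -c * doublePrimitive U t
  have hY (t : ℝ) : HasDerivAt Y (c * ∫ s in (0:ℝ)..t, U s) t :=
    ((hasDerivAt_doublePrimitive (fun a b => hU.intervalIntegrable a b) t).const_mul
      (-c)).congr_deriv (by ring)
  have hY' (t : ℝ) (ht : t ∈ Icc (0:ℝ) 1) :
      HasDerivAt (fun t => c * ∫ s in (0:ℝ)..t, U s) (c * Y t) t := by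
    have := ((hU.integral_hasStrictDerivAt 0 t).hasDerivAt).const_mul c
    rwa [h t ht] at this
  have hYα := hP.eq_mul_fst (fun t _ => hY t) hY' (by simp)
  have hY0 : Y 0 = 0 := by
    have hY1 : Y 1 = 0 := by simp [Y, doublePrimitive]
    exact (mul_eq_zero.1 ((hYα 1 ⟨zero_le_one, le_rfl⟩).symm.trans hY1)).resolve_right hα1
  intro t ht
  rw [h t ht]
  change Y t = 0
  rw [hYα t ht, hY0, zero_mul]

theorem ae_eq_zero_of_add_doublePrimitive_eq_zero (hP : IsFundamentalPair c α β) (hα1 : α 1 ≠ 0)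
    {w : ℝ → ℝ} (hw : ∀ a b, IntervalIntegrable w volume a b)
    (h : ∀ᵐ t ∂volume.restrict (Ioo (0:ℝ) 1), w t + c * doublePrimitive w t = 0) :
    w =ᵐ[volume.restrict (Ioo (0:ℝ) 1)] 0 := by
  have hwU : w =ᵐ[volume.restrict (Ioo 0 1)] fun t => -c * doublePrimitive w t :=
    h.mono fun t ht => by linarith
  have hU0 := hP.eq_zero_of_eq_neg_mul_doublePrimitive hα1 (continuous_doublePrimitive hw)
    fun t ht => by rw [doublePrimitive_congr hwU ht, doublePrimitive_const_mul]
  filter_upwards [hwU, ae_restrict_mem measurableSet_Ioo] with t hwt ht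
  rw [hwt, hU0 t (Ioo_subset_Icc_self ht), mul_zero, Pi.zero_apply]

theorem ae_eq_of_add_doublePrimitive_eq (hP : IsFundamentalPair c α β) (hα1 : α 1 ≠ 0)
    {f v₁ v₂ : ℝ → ℝ} (hv₁ : IntegrableOn v₁ (Ioo 0 1)) (hv₂ : IntegrableOn v₂ (Ioo 0 1))
    (h₁ : ∀ᵐ t ∂volume.restrict (Ioo (0:ℝ) 1), v₁ t + c * doublePrimitive v₁ t = f t)
    (h₂ : ∀ᵐ t ∂volume.restrict (Ioo (0:ℝ) 1), v₂ t + c * doublePrimitive v₂ t = f t) :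
    v₁ =ᵐ[volume.restrict (Ioo (0:ℝ) 1)] v₂ := by
  set w₁ := (Ioo (0:ℝ) 1).indicator v₁
  set w₂ := (Ioo (0:ℝ) 1).indicator v₂
  have hw₁ (a b : ℝ) : IntervalIntegrable w₁ volume a b :=
    ((integrable_indicator_iff measurableSet_Ioo).2 hv₁).intervalIntegrable
  have hw₂ (a b : ℝ) : IntervalIntegrable w₂ volume a b :=
    ((integrable_indicator_iff measurableSet_Ioo).2 hv₂).intervalIntegrable
  have e₁ : w₁ =ᵐ[volume.restrict (Ioo 0 1)] v₁ := indicator_ae_eq_restrict measurableSet_Ioo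
  have e₂ : w₂ =ᵐ[volume.restrict (Ioo 0 1)] v₂ := indicator_ae_eq_restrict measurableSet_Ioo
  have hw : (fun t => w₁ t - w₂ t) =ᵐ[volume.restrict (Ioo 0 1)] 0 := by
    refine hP.ae_eq_zero_of_add_doublePrimitive_eq_zero hα1 (fun a b => (hw₁ a b).sub (hw₂ a b)) ?_
    filter_upwards [h₁, h₂, e₁, e₂, ae_restrict_mem measurableSet_Ioo] with t h₁ h₂ e₁' e₂' ht
    rw [doublePrimitive_sub hw₁ hw₂, doublePrimitive_congr e₁ (Ioo_subset_Icc_self ht),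
      doublePrimitive_congr e₂ (Ioo_subset_Icc_self ht), e₁', e₂']
    linear_combination h₁ - h₂
  filter_upwards [hw, e₁, e₂] with t ht e₁ e₂
  rw [← e₁, ← e₂]
  exact sub_eq_zero.1 ht

theorem exists_continuous_doublePrimitive_sub_eq (hP : IsFundamentalPair c α β) (hα1 : α 1 ≠ 0)
    {f : ℝ → ℝ} (hf : IntegrableOn f (Ioo 0 1)) :
    ∃ U : ℝ → ℝ, Continuous U ∧
      ∀ t ∈ Icc (0:ℝ) 1, doublePrimitive (fun s => f s - c * U s) t = U t := by
  set g := (Ioo (0:ℝ) 1).indicator f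
  have hg (a b : ℝ) : IntervalIntegrable g volume a b :=
    ((integrable_indicator_iff measurableSet_Ioo).2 hf).intervalIntegrable
  obtain ⟨U, hU, hUeq⟩ :=
    hP.exists_continuous_add_doublePrimitive_eq hα1 (continuous_primitive hg 0)
  refine ⟨U, hU, fun t ht => ?_⟩
  have hfg : (fun s => f s - c * U s) =ᵐ[volume.restrict (Ioo 0 1)] fun s => g s - c * U s :=
    (indicator_ae_eq_restrict (f := f) measurableSet_Ioo).mono fun s hs => by simp only [g, hs]
  have hcU : Continuous fun s => c * U s := by fun_prop
  rw [doublePrimitive_congr hfg ht, doublePrimitive_sub hg fun a b => hcU.intervalIntegrable a b,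
    doublePrimitive_const_mul]
  have hKg : U t + c * doublePrimitive U t = doublePrimitive g t := hUeq t
  linarith

end IsFundamentalPair

/-- if `ab ∉ {−(π/2+kπ)² : k ∈ ℕ}`, then for every `f ∈ L²(0,1)` the
integral equation `u(t) + ab ∫ₜ¹ ∫₀ˢ u(σ) dσ ds = f(t)` has a unique solution
`u ∈ L²(0,1)` (unique up to a.e. equality). -/
theorem integral_equation_solvable (a b : ℝ)
    (hab : ∀ k : ℕ, a * b ≠ -(Real.pi / 2 + k * Real.pi) ^ 2)
    (f : ℝ → ℝ) (hf : MemLp f 2 (volume.restrict (Set.Ioo (0:ℝ) 1))) :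
    ∃ u : ℝ → ℝ, MemLp u 2 (volume.restrict (Set.Ioo (0:ℝ) 1)) ∧
      (∀ᵐ t ∂(volume.restrict (Set.Ioo (0:ℝ) 1)),
        u t + a * b * ∫ s in t..(1:ℝ), ∫ σ in (0:ℝ)..s, u σ = f t) ∧
      ∀ v : ℝ → ℝ, MemLp v 2 (volume.restrict (Set.Ioo (0:ℝ) 1)) →
        (∀ᵐ t ∂(volume.restrict (Set.Ioo (0:ℝ) 1)),
          v t + a * b * ∫ s in t..(1:ℝ), ∫ σ in (0:ℝ)..s, v σ = f t) →
        v =ᵐ[volume.restrict (Set.Ioo (0:ℝ) 1)] u := by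
  obtain ⟨α, β, hP, hα1⟩ := exists_isFundamentalPair hab
  obtain ⟨U, hU, hUeq⟩ := hP.exists_continuous_doublePrimitive_sub_eq hα1 (hf.integrable one_le_two)
  have hu : MemLp (fun s => f s - a * b * U s) 2 (volume.restrict (Ioo 0 1)) :=
    hf.sub ((hU.memLp_restrict_Ioo 2 0 1).const_mul _)
  have hsol : ∀ᵐ t ∂volume.restrict (Ioo (0:ℝ) 1),
      (f t - a * b * U t) + a * b * doublePrimitive (fun s => f s - a * b * U s) t = f t := by
    filter_upwards [ae_restrict_mem measurableSet_Ioo] with t ht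
    rw [hUeq t (Ioo_subset_Icc_self ht)]
    ring
  exact ⟨_, hu, hsol, fun v hv hveq => hP.ae_eq_of_add_doublePrimitive_eq hα1
    (hv.integrable one_le_two) (hu.integrable one_le_two) hveq hsol⟩
end

section
/- Let a, b ∈ ℝ with b ≠ 0 and ab ∈ { −(π/2 + kπ)² : k ∈ ℕ }. Then there exists f ∈ L²(0,1;ℝ) such that the integral equation u(t) + ab ∫ₜ¹ ∫₀ˢ u(σ) dσ ds = f(t) has no solution u ∈ L²(0,1;ℝ). -/
/-!
Let `c = π/2 + kπ`, so `cos c = 0` and `ab = -c²`, and write `K u (t) = ∫ₜ¹ ∫₀ˢ u`.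
Exchanging the order of integration twice moves `K` onto the test function:
`⟨K u, φ⟩ = ⟨u, K* φ⟩` with `K* φ (σ) = ∫_σ¹ ∫₀ˢ φ`, and `K* cos(c·) = cos(c·) / c²` because
`cos c = 0`. Testing `u + ab K u = cos(c·)` against `cos(c·)` therefore gives
`(1 + ab / c²) ⟨u, cos(c·)⟩ = 0` on the left and `∫₀¹ cos² (c t) dt = 1/2` on the right.
-/

open MeasureTheory Set

theorem integral_primitive_mul_eq_integral_mul_tail {a b : ℝ} (hab : a ≤ b)
    {φ ψ : ℝ → ℝ} (hφ : IntervalIntegrable φ volume a b) (hψ : IntervalIntegrable ψ volume a b) :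
    ∫ s in a..b, (∫ σ in a..s, φ σ) * ψ s = ∫ σ in a..b, φ σ * ∫ s in σ..b, ψ s := by
  set μ := volume.restrict (Ioc a b)
  have hφ' : Integrable φ μ := (intervalIntegrable_iff_integrableOn_Ioc_of_le hab).1 hφ
  have hψ' : Integrable ψ μ := (intervalIntegrable_iff_integrableOn_Ioc_of_le hab).1 hψ
  set F : ℝ → ℝ → ℝ := fun σ s =>
    {p : ℝ × ℝ | p.1 ≤ p.2}.indicator (fun p => φ p.1 * ψ p.2) (σ, s)
  have hF : Integrable (Function.uncurry F) (μ.prod μ) :=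
    (hφ'.mul_prod hψ').indicator (measurableSet_le measurable_fst measurable_snd)
  have inner_left : ∀ s ∈ Ioc a b, ∫ σ, F σ s ∂μ = (∫ σ in a..s, φ σ) * ψ s := by
    intro s hs
    have : (fun σ => F σ s) = (Iic s).indicator (fun σ => φ σ * ψ s) := by
      ext σ; by_cases h : σ ≤ s <;> simp [F, h]
    rw [this, integral_indicator measurableSet_Iic, Measure.restrict_restrict measurableSet_Iic,
      Iic_inter_Ioc_of_le hs.2, integral_mul_const, intervalIntegral.integral_of_le hs.1.le]
  have inner_right : ∀ σ ∈ Ioc a b, ∫ s, F σ s ∂μ = φ σ * ∫ s in σ..b, ψ s := by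
    intro σ hσ
    have : (fun s => F σ s) = (Ici σ).indicator (fun s => φ σ * ψ s) := by
      ext s; by_cases h : σ ≤ s <;> simp [F, h]
    have hIcc : Ici σ ∩ Ioc a b = Icc σ b := by
      ext x
      simp only [mem_inter_iff, mem_Ici, mem_Ioc, mem_Icc]
      grind [hσ.1]
    rw [this, integral_indicator measurableSet_Ici, Measure.restrict_restrict measurableSet_Ici,
      hIcc, integral_Icc_eq_integral_Ioc, integral_const_mul,
      intervalIntegral.integral_of_le hσ.2]
  calc ∫ s in a..b, (∫ σ in a..s, φ σ) * ψ s = ∫ s, ∫ σ, F σ s ∂μ ∂μ := by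
        rw [intervalIntegral.integral_of_le hab]
        exact (setIntegral_congr_fun measurableSet_Ioc inner_left).symm
    _ = ∫ σ, ∫ s, F σ s ∂μ ∂μ := (integral_integral_swap hF).symm
    _ = ∫ σ in a..b, φ σ * ∫ s in σ..b, ψ s := by
        rw [intervalIntegral.integral_of_le hab]
        exact setIntegral_congr_fun measurableSet_Ioc inner_right

theorem integral_tail_primitive_mul_eq_integral_mul_tail_primitive {a b : ℝ} (hab : a ≤ b)
    {u φ : ℝ → ℝ} (hu : IntervalIntegrable u volume a b) (hφ : IntervalIntegrable φ volume a b) :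
    ∫ t in a..b, (∫ s in t..b, ∫ σ in a..s, u σ) * φ t
      = ∫ σ in a..b, u σ * ∫ s in σ..b, ∫ r in a..s, φ r := by
  have primitive_integrable : ∀ {f : ℝ → ℝ}, IntervalIntegrable f volume a b →
      IntervalIntegrable (fun s => ∫ σ in a..s, f σ) volume a b := fun hf =>
    (intervalIntegral.continuousOn_primitive_interval' hf left_mem_uIcc).intervalIntegrable
  calc ∫ t in a..b, (∫ s in t..b, ∫ σ in a..s, u σ) * φ t
      = ∫ t in a..b, φ t * ∫ s in t..b, ∫ σ in a..s, u σ := by simp only [mul_comm]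
    _ = ∫ s in a..b, (∫ r in a..s, φ r) * ∫ σ in a..s, u σ :=
        (integral_primitive_mul_eq_integral_mul_tail hab hφ (primitive_integrable hu)).symm
    _ = ∫ s in a..b, (∫ σ in a..s, u σ) * ∫ r in a..s, φ r := by simp only [mul_comm]
    _ = ∫ σ in a..b, u σ * ∫ s in σ..b, ∫ r in a..s, φ r :=
        integral_primitive_mul_eq_integral_mul_tail hab hu (primitive_integrable hφ)

theorem integral_integral_cos_mul {c : ℝ} (hc : c ≠ 0) (x y : ℝ) :
    ∫ s in x..y, ∫ r in (0 : ℝ)..s, Real.cos (c * r)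
      = (Real.cos (c * x) - Real.cos (c * y)) / c ^ 2 := by
  have inner : ∀ s : ℝ, ∫ r in (0 : ℝ)..s, Real.cos (c * r) = Real.sin (c * s) / c := by
    intro s
    rw [intervalIntegral.integral_comp_mul_left (fun r => Real.cos r) hc, integral_cos,
      mul_zero, Real.sin_zero, sub_zero, smul_eq_mul, inv_mul_eq_div]
  simp only [inner]
  rw [intervalIntegral.integral_div,
    intervalIntegral.integral_comp_mul_left (fun r => Real.sin r) hc, integral_sin, smul_eq_mul]
  field_simp

theorem integral_cos_mul_sq {c : ℝ} (hc : c ≠ 0) (hcos : Real.cos c = 0) :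
    ∫ t in (0 : ℝ)..1, Real.cos (c * t) ^ 2 = 1 / 2 := by
  rw [intervalIntegral.integral_comp_mul_left (fun r => Real.cos r ^ 2) hc, integral_cos_sq,
    mul_one, mul_zero, hcos, Real.cos_zero, Real.sin_zero, smul_eq_mul]
  field_simp
  ring

theorem integral_tail_primitive_mul_cos {c : ℝ} (hc : c ≠ 0) (hcos : Real.cos c = 0)
    {u : ℝ → ℝ} (hu : IntervalIntegrable u volume 0 1) :
    ∫ t in (0 : ℝ)..1, (∫ s in t..1, ∫ σ in (0 : ℝ)..s, u σ) * Real.cos (c * t)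
      = (∫ t in (0 : ℝ)..1, u t * Real.cos (c * t)) / c ^ 2 := by
  have hcont : Continuous fun t => Real.cos (c * t) := by fun_prop
  rw [integral_tail_primitive_mul_eq_integral_mul_tail_primitive zero_le_one hu
      (hcont.intervalIntegrable 0 1),
    ← intervalIntegral.integral_div]
  simp only [integral_integral_cos_mul hc, mul_one, hcos, sub_zero, mul_div_assoc]

theorem integral_equation_not_solvable_general (a b : ℝ)
    (hab : ∃ k : ℕ, a * b = -(Real.pi / 2 + k * Real.pi) ^ 2) :
    ∃ f : ℝ → ℝ, MemLp f 2 (volume.restrict (Set.Ioo (0:ℝ) 1)) ∧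
      ¬ ∃ u : ℝ → ℝ, MemLp u 2 (volume.restrict (Set.Ioo (0:ℝ) 1)) ∧
        ∀ᵐ t ∂(volume.restrict (Set.Ioo (0:ℝ) 1)),
          u t + a * b * ∫ s in t..(1:ℝ), ∫ σ in (0:ℝ)..s, u σ = f t := by
  obtain ⟨k, hk⟩ := hab
  set c := Real.pi / 2 + k * Real.pi
  have hc : c ≠ 0 := by positivity
  have hcos : Real.cos c = 0 := by
    rw [show c = k * Real.pi + Real.pi / 2 by ring, Real.cos_add_pi_div_two,
      Real.sin_nat_mul_pi, neg_zero]
  have hcont : Continuous fun t => Real.cos (c * t) := by fun_prop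
  refine ⟨fun t => Real.cos (c * t), MemLp.of_bound hcont.aestronglyMeasurable 1
    (.of_forall fun t => (Real.norm_eq_abs _).trans_le (Real.abs_cos_le_one _)), ?_⟩
  rintro ⟨u, hu, hsol⟩
  have hu_int : IntervalIntegrable u volume 0 1 := by
    rw [intervalIntegrable_iff_integrableOn_Ioc_of_le zero_le_one,
      integrableOn_Ioc_iff_integrableOn_Ioo]
    exact hu.integrable one_le_two
  set K := fun t => ∫ s in t..(1:ℝ), ∫ σ in (0:ℝ)..s, u σ
  have hK : ContinuousOn K (uIcc 0 1) :=
    intervalIntegral.continuousOn_primitive_interval_left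
      (intervalIntegral.continuousOn_primitive_interval' hu_int left_mem_uIcc).integrableOn_uIcc
  have tested : ∫ t in (0:ℝ)..1, (u t + a * b * K t) * Real.cos (c * t)
      = ∫ t in (0:ℝ)..1, Real.cos (c * t) ^ 2 := by
    rw [Measure.restrict_congr_set Ioo_ae_eq_Ioc] at hsol
    refine intervalIntegral.integral_congr_ae ?_
    filter_upwards [(ae_restrict_iff' measurableSet_Ioc).1 hsol] with t ht ht'
    rw [ht (by rwa [uIoc_of_le zero_le_one] at ht'), sq]
  have hKcos : IntervalIntegrable (fun t => K t * Real.cos (c * t)) volume 0 1 :=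
    (hK.mul hcont.continuousOn).intervalIntegrable
  simp only [add_mul, mul_assoc (a * b)] at tested
  rw [intervalIntegral.integral_add (hu_int.mul_continuousOn hcont.continuousOn)
      (hKcos.const_mul _),
    intervalIntegral.integral_const_mul, integral_tail_primitive_mul_cos hc hcos hu_int,
    integral_cos_mul_sq hc hcos, hk] at tested
  field_simp at tested
  simp at tested

/-- if `b ≠ 0` and `ab ∈ {−(π/2+kπ)² : k ∈ ℕ}`, then there is
`f ∈ L²(0,1)` for which the integral equation
`u(t) + ab ∫ₜ¹ ∫₀ˢ u(σ) dσ ds = f(t)` has no solution `u ∈ L²(0,1)`. -/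
theorem integral_equation_not_solvable (a b : ℝ) (hb : b ≠ 0)
    (hab : ∃ k : ℕ, a * b = -(Real.pi / 2 + k * Real.pi) ^ 2) :
    ∃ f : ℝ → ℝ, MemLp f 2 (volume.restrict (Set.Ioo (0:ℝ) 1)) ∧
      ¬ ∃ u : ℝ → ℝ, MemLp u 2 (volume.restrict (Set.Ioo (0:ℝ) 1)) ∧
        ∀ᵐ t ∂(volume.restrict (Set.Ioo (0:ℝ) 1)),
          u t + a * b * ∫ s in t..(1:ℝ), ∫ σ in (0:ℝ)..s, u σ = f t :=
  integral_equation_not_solvable_general a b hab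
end

section
/- For the 3×3 constant-coefficient system ∂_t y₁ − ∂_x y₁ = 0, ∂_t y₂ − (1/2) ∂_x y₂ = a y₁(t,0), ∂_t y₃ + ∂_x y₃ = b y₂(t,0) on (0,2)×(0,1) with boundary conditions y₁(t,1) = u₁(t), y₂(t,1) = u₂(t), y₃(t,0) = y₁(t,0): given that u₁ = 0 on (1,2) and u₂(t) = −a ∫ₜ² y₁(s,0) ds, the null controllability condition y₃(2,·) = 0 is equivalent to the integral equation u₁(t) + ab ∫ₜ¹ ∫₀ˢ u₁(σ) dσ ds = f(t) on (0,1), where f(t) = −b ∫_{1+t}² y₂⁰(s/2) ds − ab(1−t) ∫₀¹ y₁⁰(θ) dθ. -/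
/-!
Along the characteristics, `y₃(2, 1 - t) = u₁(t) + b ∫_{1+t}^2 y₂(s, 0) ds`, and for `s ≤ 2` the
trace `y₂(s, 0) = y₂⁰(s/2) + a ∫_0^s y₁(σ, 0) dσ` only sees the initial datum of `y₂`, while
`∫_0^s y₁(σ, 0) dσ = ∫_0^1 y₁⁰ + ∫_0^{s-1} u₁` for `1 ≤ s ≤ 2`. Integrating in `s` shows that
`y₃(2, 1 - t)` is the difference of the two sides of the integral equation.
-/

open MeasureTheory Set

theorem MeasureTheory.MemLp.intervalIntegrable_of_mem_Icc {E : Type*} [NormedAddCommGroup E]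
    {f : ℝ → E} {p : ENNReal} (hp : 1 ≤ p) {a b c d : ℝ}
    (hf : MemLp f p (volume.restrict (Ioo a b))) (hc : c ∈ Icc a b) (hd : d ∈ Icc a b) :
    IntervalIntegrable f volume c d := by
  have : IsFiniteMeasure (volume.restrict (Ioo a b)) :=
    isFiniteMeasure_restrict.2 measure_Ioo_lt_top.ne
  have hf' : IntegrableOn f (Icc a b) :=
    (integrableOn_Icc_iff_integrableOn_Ioo).2 (hf.integrable hp)
  exact (hf'.mono_set (uIcc_subset_Icc hc hd)).intervalIntegrable

theorem intervalIntegral.integral_ite_lt_sub {E : Type*} [NormedAddCommGroup E]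
    [NormedSpace ℝ E] {g u : ℝ → E} {a c s : ℝ} (hac : a ≤ c) (hcs : c ≤ s)
    (hg : IntervalIntegrable g volume a c) (hu : IntervalIntegrable u volume 0 (s - c)) :
    ∫ σ in a..s, (if c < σ then u (σ - c) else g σ) =
      (∫ σ in a..c, g σ) + ∫ σ in 0..(s - c), u σ := by
  have hFg : EqOn (fun σ => if c < σ then u (σ - c) else g σ) g (Ioo a c) :=
    fun σ hσ => if_neg hσ.2.not_gt
  have hFu : EqOn (fun σ => if c < σ then u (σ - c) else g σ) (fun σ => u (σ - c)) (Ioo c s) :=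
    fun σ hσ => if_pos hσ.1
  have hu' : IntervalIntegrable (fun σ => u (σ - c)) volume c s := by
    simpa using hu.comp_sub_right c
  rw [← intervalIntegral.integral_add_adjacent_intervals
      (hg.congr_uIoo (uIoo_of_le hac ▸ hFg.symm)) (hu'.congr_uIoo (uIoo_of_le hcs ▸ hFu.symm)),
    intervalIntegral.integral_congr_Ioo_of_le hac hFg,
    intervalIntegral.integral_congr_Ioo_of_le hcs hFu,
    intervalIntegral.integral_comp_sub_right, sub_self]

theorem forall_mem_Ioo_zero_one_iff_one_sub {P : ℝ → Prop} :
    (∀ x ∈ Ioo (0 : ℝ) 1, P x) ↔ ∀ t ∈ Ioo (0 : ℝ) 1, P (1 - t) := by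
  refine ⟨fun h t ht => h _ ⟨by linarith [ht.2], by linarith [ht.1]⟩, fun h x hx => ?_⟩
  simpa using h (1 - x) ⟨by linarith [hx.2], by linarith [hx.1]⟩

section ExampleSystem

variable {a b : ℝ} {y10 y20 u1 u2 : ℝ → ℝ} {y1 y2 y3 : ℝ → ℝ → ℝ}

theorem integral_y1_zero
    (hy1 : ∀ t x, y1 t x = if 0 < t - 1 + x then u1 (t - 1 + x) else y10 (t + x))
    (hy10 : IntervalIntegrable y10 volume 0 1) (hu1 : IntervalIntegrable u1 volume 0 1)
    {s : ℝ} (hs : s ∈ Icc (1 : ℝ) 2) :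
    ∫ σ in (0 : ℝ)..s, y1 σ 0 = (∫ θ in (0 : ℝ)..1, y10 θ) + ∫ σ in (0 : ℝ)..(s - 1), u1 σ := by
  have hY : (fun σ => y1 σ 0) = fun σ => if 1 < σ then u1 (σ - 1) else y10 σ := by
    funext σ
    simp [hy1, sub_pos]
  rw [hY]
  refine intervalIntegral.integral_ite_lt_sub zero_le_one hs.1 hy10 (hu1.mono_set ?_)
  exact uIcc_subset_uIcc left_mem_uIcc
    (mem_uIcc_of_le (by linarith [hs.1]) (by linarith [hs.2]))

theorem y3_two_one_sub_eq
    (hy1 : ∀ t x, y1 t x = if 0 < t - 1 + x then u1 (t - 1 + x) else y10 (t + x))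
    (hy2 : ∀ t x, y2 t x =
      if 0 < t - 2 * (1 - x) then
        u2 (t - 2 * (1 - x)) + a * ∫ s in (t - 2 * (1 - x))..t, y1 s 0
      else
        y20 (t / 2 + x) + a * ∫ s in (0:ℝ)..t, y1 s 0)
    (hy3 : ∀ t x, 0 < t - x → y3 t x = y1 (t - x) 0 + b * ∫ s in (t - x)..t, y2 s 0)
    (hy10 : IntervalIntegrable y10 volume 0 1)
    (hy20 : IntervalIntegrable (fun s => y20 (s / 2)) volume 1 2)
    (hu1 : IntervalIntegrable u1 volume 0 1) {t : ℝ} (ht : t ∈ Ioo (0 : ℝ) 1) :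
    y3 2 (1 - t) = (u1 t + a * b * ∫ s in t..(1 : ℝ), ∫ σ in (0 : ℝ)..s, u1 σ) -
      (-b * (∫ s in (1 + t)..(2 : ℝ), y20 (s / 2)) -
        a * b * (1 - t) * ∫ θ in (0 : ℝ)..1, y10 θ) := by
  obtain ⟨ht0, ht1⟩ := ht
  set U := fun r => ∫ σ in (0 : ℝ)..r, u1 σ
  have hU : IntervalIntegrable (fun s => U (s - 1)) volume (1 + t) 2 := by
    have h : IntervalIntegrable U volume t 1 :=
      ((intervalIntegral.continuousOn_primitive_interval' hu1 left_mem_uIcc).mono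
        (uIcc_subset_uIcc (mem_uIcc_of_le ht0.le ht1.le) right_mem_uIcc)).intervalIntegrable
    simpa [add_comm, one_add_one_eq_two] using h.comp_sub_right 1
  have hy2_zero : EqOn (fun s => y2 s 0)
      (fun s => y20 (s / 2) + a * ((∫ θ in (0 : ℝ)..1, y10 θ) + U (s - 1))) (uIcc (1 + t) 2) := by
    intro s hs
    rw [uIcc_of_le (by linarith)] at hs
    simp only [hy2, if_neg (show ¬ (0 : ℝ) < s - 2 * (1 - 0) by linarith [hs.2]), add_zero]
    rw [integral_y1_zero hy1 hy10 hu1 ⟨by linarith [hs.1], hs.2⟩]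
  have hy20' : IntervalIntegrable (fun s => y20 (s / 2)) volume (1 + t) 2 :=
    hy20.mono_set (uIcc_subset_uIcc (mem_uIcc_of_le (by linarith) (by linarith)) right_mem_uIcc)
  rw [hy3 2 (1 - t) (by linarith), show (2 : ℝ) - (1 - t) = 1 + t by ring, hy1,
    if_pos (by linarith), intervalIntegral.integral_congr hy2_zero,
    intervalIntegral.integral_add hy20' ((intervalIntegrable_const.add hU).const_mul a),
    intervalIntegral.integral_const_mul,
    intervalIntegral.integral_add intervalIntegrable_const hU, intervalIntegral.integral_const,
    intervalIntegral.integral_comp_sub_right U, add_sub_cancel_left, add_zero, smul_eq_mul,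
    show (2 : ℝ) - 1 = 1 by norm_num]
  ring

end ExampleSystem

theorem example_system_null_controllability_iff_general (a b : ℝ)
    (y10 y20 : ℝ → ℝ) (u1 u2 : ℝ → ℝ) (y1 y2 y3 : ℝ → ℝ → ℝ)
    (hy10 : MemLp y10 2 (volume.restrict (Set.Ioo (0:ℝ) 1)))
    (hy20 : MemLp y20 2 (volume.restrict (Set.Ioo (0:ℝ) 1)))
    (hu1L2 : MemLp u1 2 (volume.restrict (Set.Ioo (0:ℝ) 2)))
    (hy1 : ∀ t x, y1 t x = if 0 < t - 1 + x then u1 (t - 1 + x) else y10 (t + x))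
    (hy2 : ∀ t x, y2 t x =
      if 0 < t - 2 * (1 - x) then
        u2 (t - 2 * (1 - x)) + a * ∫ s in (t - 2 * (1 - x))..t, y1 s 0
      else
        y20 (t / 2 + x) + a * ∫ s in (0:ℝ)..t, y1 s 0)
    (hy3 : ∀ t x, 0 < t - x → y3 t x = y1 (t - x) 0 + b * ∫ s in (t - x)..t, y2 s 0) :
    (∀ x ∈ Set.Ioo (0:ℝ) 1, y3 2 x = 0) ↔
    (∀ t ∈ Set.Ioo (0:ℝ) 1,
      u1 t + a * b * ∫ s in t..(1:ℝ), ∫ σ in (0:ℝ)..s, u1 σ =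
        -b * (∫ s in (1 + t)..(2:ℝ), y20 (s / 2)) -
          a * b * (1 - t) * ∫ θ in (0:ℝ)..1, y10 θ) := by
  have hy10' : IntervalIntegrable y10 volume 0 1 :=
    hy10.intervalIntegrable_of_mem_Icc one_le_two (left_mem_Icc.2 zero_le_one)
      (right_mem_Icc.2 zero_le_one)
  have hu1' : IntervalIntegrable u1 volume 0 1 :=
    hu1L2.intervalIntegrable_of_mem_Icc one_le_two (left_mem_Icc.2 zero_le_two)
      ⟨zero_le_one, one_le_two⟩
  have hy20' : IntervalIntegrable (fun s => y20 (s / 2)) volume 1 2 := by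
    simpa [div_eq_inv_mul] using (hy20.intervalIntegrable_of_mem_Icc one_le_two
      (c := 1 / 2) ⟨by norm_num, by norm_num⟩ (right_mem_Icc.2 zero_le_one)).comp_mul_left
      (c := 2⁻¹)
  rw [forall_mem_Ioo_zero_one_iff_one_sub]
  refine forall₂_congr fun t ht => ?_
  rw [y3_two_one_sub_eq hy1 hy2 hy3 hy10' hy20' hu1' ht, sub_eq_zero]

/-- for the 3×3 example system, with `u₁ = 0` on `(1,2)` and
`u₂(t) = −a ∫ₜ² y₁(s,0) ds`, the null controllability condition `y₃(2,·) = 0` is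
equivalent to the integral equation
`u₁(t) + ab ∫ₜ¹ ∫₀ˢ u₁(σ) dσ ds = f(t)` on `(0,1)`, where
`f(t) = −b ∫_{1+t}² y₂⁰(s/2) ds − ab(1−t) ∫₀¹ y₁⁰(θ) dθ`. -/
theorem example_system_null_controllability_iff (a b : ℝ)
    (y10 y20 : ℝ → ℝ) (u1 u2 : ℝ → ℝ) (y1 y2 y3 : ℝ → ℝ → ℝ)
    (hy10 : MemLp y10 2 (volume.restrict (Set.Ioo (0:ℝ) 1)))
    (hy20 : MemLp y20 2 (volume.restrict (Set.Ioo (0:ℝ) 1)))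
    (hu1L2 : MemLp u1 2 (volume.restrict (Set.Ioo (0:ℝ) 2)))
    (hy1 : ∀ t x, y1 t x = if 0 < t - 1 + x then u1 (t - 1 + x) else y10 (t + x))
    (hy2 : ∀ t x, y2 t x =
      if 0 < t - 2 * (1 - x) then
        u2 (t - 2 * (1 - x)) + a * ∫ s in (t - 2 * (1 - x))..t, y1 s 0
      else
        y20 (t / 2 + x) + a * ∫ s in (0:ℝ)..t, y1 s 0)
    (hy3 : ∀ t x, 0 < t - x → y3 t x = y1 (t - x) 0 + b * ∫ s in (t - x)..t, y2 s 0)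
    (hu1 : ∀ t ∈ Set.Ioo (1:ℝ) 2, u1 t = 0)
    (hu2 : ∀ t ∈ Set.Ioo (0:ℝ) 2, u2 t = -a * ∫ s in t..(2:ℝ), y1 s 0) :
    (∀ x ∈ Set.Ioo (0:ℝ) 1, y3 2 x = 0) ↔
    (∀ t ∈ Set.Ioo (0:ℝ) 1,
      u1 t + a * b * ∫ s in t..(1:ℝ), ∫ σ in (0:ℝ)..s, u1 σ =
        -b * (∫ s in (1 + t)..(2:ℝ), y20 (s / 2)) -
          a * b * (1 - t) * ∫ θ in (0:ℝ)..1, y10 θ) :=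
  example_system_null_controllability_iff_general a b y10 y20 u1 u2 y1 y2 y3 hy10 hy20 hu1L2 hy1 hy2
    hy3
end

section
/- Let P : E₁ → E₂ be a compact operator between Banach spaces, H a Hilbert space, and L : D → E₁ a linear map on a subspace D ⊂ H. Suppose (zₙ) ⊂ D is a sequence, (Sₙ) ⊂ H, and (wₙ) nonnegative reals with Sₙ depending on zₙ, satisfying: ‖L zₙ‖ ≤ C(‖Sₙ‖² + wₙ)^{1/2}, ‖Sₙ − Sₖ‖² ≤ C(wₙ + wₖ + ‖P L zₙ − P L zₖ‖²) for a suitable constant C, ‖Sₙ‖ = 1, wₙ → 0. Then (Sₙ) has a convergent subsequence with nonzero limit. -/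
/-!
A compact operator maps the bounded sequence `(L zₙ)` to a sequence with a convergent
subsequence. Along it, the second estimate bounds `‖Sₙ - Sₖ‖²` by quantities tending to zero,
so `(Sₙ)` is Cauchy there and converges in the Hilbert space; the limit inherits `‖Sₙ‖ = 1`.
-/

open Filter Topology Set Bornology

theorem IsCompactOperator.exists_strictMono_tendsto_comp {𝕜 M₁ M₂ : Type*}
    [NontriviallyNormedField 𝕜] [SeminormedAddCommGroup M₁] [NormedSpace 𝕜 M₁]
    [TopologicalSpace M₂] [AddCommMonoid M₂] [Module 𝕜 M₂] [ContinuousConstSMul 𝕜 M₂]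
    [FirstCountableTopology M₂] {f : M₁ →ₗ[𝕜] M₂} (hf : IsCompactOperator f) {x : ℕ → M₁}
    (hx : IsBounded (range x)) :
    ∃ y, ∃ φ : ℕ → ℕ, StrictMono φ ∧ Tendsto (fun n => f (x (φ n))) atTop (𝓝 y) := by
  obtain ⟨K, hK, hxK⟩ := hf.image_subset_compact_of_bounded hx
  obtain ⟨y, -, φ, hφ, hy⟩ := hK.tendsto_subseq fun n => hxK ⟨x n, mem_range_self n, rfl⟩
  exact ⟨y, φ, hφ, hy⟩

theorem cauchySeq_of_dist_sq_le {α β : Type*} [PseudoMetricSpace α] [PseudoMetricSpace β]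
    {S : ℕ → α} {g : ℕ → β} {w : ℕ → ℝ} (C : ℝ)
    (hS : ∀ n k, dist (S n) (S k) ^ 2 ≤ C * (w n + w k + dist (g n) (g k) ^ 2))
    (hw : Tendsto w atTop (𝓝 0)) (hg : CauchySeq g) : CauchySeq S := by
  rw [cauchySeq_iff_tendsto_dist_atTop_0] at hg ⊢
  have hw₂ : Tendsto (fun p : ℕ × ℕ => w p.1 + w p.2) atTop (𝓝 0) := by
    rw [← prod_atTop_atTop_eq]
    simpa using (hw.comp tendsto_fst).add (hw.comp tendsto_snd)
  have hbound : Tendsto (fun p : ℕ × ℕ => √(C * (w p.1 + w p.2 + dist (g p.1) (g p.2) ^ 2)))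
      atTop (𝓝 0) := by
    simpa using ((hw₂.add (hg.pow 2)).const_mul C).sqrt
  exact squeeze_zero (fun _ => dist_nonneg) (fun p => Real.le_sqrt_of_sq_le (hS _ _)) hbound

theorem compactness_uniqueness_extraction_general {H E₁ E₂ : Type*}
    [NormedAddCommGroup H] [InnerProductSpace ℂ H] [CompleteSpace H]
    [NormedAddCommGroup E₁] [NormedSpace ℂ E₁]
    [NormedAddCommGroup E₂] [NormedSpace ℂ E₂]
    (P : E₁ →L[ℂ] E₂) (hP : IsCompactOperator P)
    (D : Submodule ℂ H) (L : D →ₗ[ℂ] E₁)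
    (z : ℕ → D) (S : ℕ → H) (w : ℕ → ℝ)
    (C : ℝ)
    (h1 : ∀ n, ‖L (z n)‖ ≤ C * Real.sqrt (‖S n‖ ^ 2 + w n))
    (h2 : ∀ n k, ‖S n - S k‖ ^ 2 ≤ C * (w n + w k + ‖P (L (z n)) - P (L (z k))‖ ^ 2))
    (hS : ∀ n, ‖S n‖ = 1)
    (hw : Filter.Tendsto w Filter.atTop (nhds 0)) :
    ∃ φ : ℕ → ℕ, StrictMono φ ∧ ∃ f : H, f ≠ 0 ∧
      Filter.Tendsto (fun n => S (φ n)) Filter.atTop (nhds f) := by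
  have hLz : ∀ n, ‖L (z n)‖ ≤ C * √(1 + w n) := fun n => by
    simpa only [hS, one_pow] using h1 n
  have hbdd : IsBounded (range fun n => L (z n)) := by
    obtain ⟨M, hM⟩ := ((hw.const_add 1).sqrt.const_mul C).bddAbove_range
    exact isBounded_iff_forall_norm_le.2
      ⟨M, forall_mem_range.2 fun n => (hLz n).trans (hM (mem_range_self n))⟩
  obtain ⟨y, φ, hφ, hPLz⟩ :=
    IsCompactOperator.exists_strictMono_tendsto_comp (f := (P : E₁ →ₗ[ℂ] E₂)) hP hbdd
  have hSφ : CauchySeq (fun n => S (φ n)) :=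
    cauchySeq_of_dist_sq_le (g := fun n => P (L (z (φ n)))) C
      (fun n k => by simpa only [dist_eq_norm, Function.comp_apply] using h2 (φ n) (φ k))
      (hw.comp hφ.tendsto_atTop) hPLz.cauchySeq
  obtain ⟨f, hf⟩ := cauchySeq_tendsto_of_complete hSφ
  have hf_norm : ‖f‖ = 1 := tendsto_nhds_unique hf.norm (by simp only [hS, tendsto_const_nhds])
  exact ⟨φ, hφ, f, norm_ne_zero_iff.1 (hf_norm ▸ one_ne_zero), hf⟩

/-- abstract extraction step of the compactness-uniqueness method:
from the two estimates, normalization `‖Sₙ‖ = 1` and `wₙ → 0`, one extracts a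
subsequence of `(Sₙ)` converging to a nonzero limit. -/
theorem compactness_uniqueness_extraction {H E₁ E₂ : Type*}
    [NormedAddCommGroup H] [InnerProductSpace ℂ H] [CompleteSpace H]
    [NormedAddCommGroup E₁] [NormedSpace ℂ E₁] [CompleteSpace E₁]
    [NormedAddCommGroup E₂] [NormedSpace ℂ E₂] [CompleteSpace E₂]
    (P : E₁ →L[ℂ] E₂) (hP : IsCompactOperator P)
    (D : Submodule ℂ H) (L : D →ₗ[ℂ] E₁)
    (z : ℕ → D) (S : ℕ → H) (w : ℕ → ℝ) (hw0 : ∀ n, 0 ≤ w n)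
    (C : ℝ) (hC : 0 < C)
    (h1 : ∀ n, ‖L (z n)‖ ≤ C * Real.sqrt (‖S n‖ ^ 2 + w n))
    (h2 : ∀ n k, ‖S n - S k‖ ^ 2 ≤ C * (w n + w k + ‖P (L (z n)) - P (L (z k))‖ ^ 2))
    (hS : ∀ n, ‖S n‖ = 1)
    (hw : Filter.Tendsto w Filter.atTop (nhds 0)) :
    ∃ φ : ℕ → ℕ, StrictMono φ ∧ ∃ f : H, f ≠ 0 ∧
      Filter.Tendsto (fun n => S (φ n)) Filter.atTop (nhds f) :=
  compactness_uniqueness_extraction_general P hP D L z S w C h1 h2 hS hw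
end
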